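/- arXiv:1808.01647 — 3 statements merged into one kernel-verified Lean document; each statement's English description precedes it below -/
import Mathlib

section
/- Let Z be a random variable on a finite set Ω_Z, X another random variable, and θ a parameter. Let Z_sub be a fixed subvector of coordinates of Z, and T a function of Z. Suppose T is sufficient for θ (i.e., the conditional distribution of Z given X and T does not depend on θ), and suppose that for every value t of T there exist z°, z* in Ω_Z with T(z°) = T(z*) = t whose corresponding subvectors z_sub° and z_sub* differ. If for every z in Ω_Z and corresponding subvector z_sub we have 0 < P(Z = z | X, θ) ≤ P(Z_sub = z_sub | X, θ) < 1, then for every z in Ω_Z, 0 < P(Z_sub = z_sub | X, T = T(z)) < 1. -/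
open Finset

/-- Theorem 1 of the paper, discrete form.
`p θ x z` is the conditional probability `P(Z = z | X = x, θ)`.
`sub` extracts the subvector `Z_sub` of `Z`; `T` is a statistic of `Z`.
Sufficiency of `T` for `θ` means the conditional distribution of `Z` given `X` and
`T` does not depend on `θ`.  The two-preimage condition says every value of `T` has two
preimages with differing subvectors.  Under the sandwich condition
`0 < P(Z = z | X, θ) ≤ P(Z_sub = z_sub | X, θ) < 1`, the conditional probability
`P(Z_sub = z_sub | X, T = T z)` lies strictly between 0 and 1. -/
theorem stmt0
    {ΩZ ΩX ΩS ΩT Θ : Type*} [Fintype ΩZ] [DecidableEq ΩS] [DecidableEq ΩT]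
    (p : Θ → ΩX → ΩZ → ℝ)
    (hprob : ∀ θ x, (∀ z, 0 ≤ p θ x z) ∧ ∑ z, p θ x z = 1)
    (sub : ΩZ → ΩS) (T : ΩZ → ΩT)
    -- sufficiency of `T` for `θ`: `P(Z = z | X, T = T z, θ)` does not depend on `θ`
    (hsuff : ∀ θ θ' x z,
      p θ x z / ∑ z' ∈ univ.filter (fun z' => T z' = T z), p θ x z'
        = p θ' x z / ∑ z' ∈ univ.filter (fun z' => T z' = T z), p θ' x z')
    -- every value of `T` has two preimages with differing subvectors
    (hT : ∀ z : ΩZ, ∃ zo zs : ΩZ, sub zo ≠ sub zs ∧ T zo = T z ∧ T zs = T z)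
    -- the sandwich condition `0 < P(Z = z | X, θ) ≤ P(Z_sub = z_sub | X, θ) < 1`
    (hsandwich : ∀ θ x z,
      0 < p θ x z ∧
      p θ x z ≤ ∑ z' ∈ univ.filter (fun z' => sub z' = sub z), p θ x z' ∧
      (∑ z' ∈ univ.filter (fun z' => sub z' = sub z), p θ x z') < 1) :
    ∀ θ x z,
      0 < (∑ z' ∈ univ.filter (fun z' => sub z' = sub z ∧ T z' = T z), p θ x z')
            / ∑ z' ∈ univ.filter (fun z' => T z' = T z), p θ x z' ∧
      (∑ z' ∈ univ.filter (fun z' => sub z' = sub z ∧ T z' = T z), p θ x z')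
            / (∑ z' ∈ univ.filter (fun z' => T z' = T z), p θ x z') < 1 := by
  intro θ x z
  have hpos : ∀ z', 0 < p θ x z' := fun z' => (hsandwich θ x z').1
  set A := univ.filter (fun z' => sub z' = sub z ∧ T z' = T z) with hA
  set B := univ.filter (fun z' => T z' = T z) with hB
  have hAB : A ⊆ B := by
    intro a ha
    simp only [hA, hB, mem_filter, mem_univ, true_and] at *
    exact ha.2
  have hzA : z ∈ A := by simp [hA]
  have hnumpos : 0 < ∑ z' ∈ A, p θ x z' :=
    Finset.sum_pos (fun i _ => hpos i) ⟨z, hzA⟩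
  have hdenpos : 0 < ∑ z' ∈ B, p θ x z' :=
    Finset.sum_pos (fun i _ => hpos i) ⟨z, hAB hzA⟩
  refine ⟨div_pos hnumpos hdenpos, ?_⟩
  rw [div_lt_one hdenpos]
  obtain ⟨zo, zs, hne, hto, hts⟩ := hT z
  obtain ⟨w, hw, hwT⟩ : ∃ w, sub w ≠ sub z ∧ T w = T z := by
    by_cases h : sub zo = sub z
    · exact ⟨zs, by rw [← h]; exact fun e => hne e.symm, hts⟩
    · exact ⟨zo, h, hto⟩
  refine Finset.sum_lt_sum_of_subset hAB (i := w) ?_ ?_ (hpos w)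
    (fun j _ _ => (hpos j).le)
  · simp [hB, hwT]
  · simp [hA, hw, hwT]
end

section
/- Let Z₁, Z₂, Z₃ be random variables and θ a parameter. Let T be a function of Z₁ that is sufficient for θ. If Z₁ and Z₂ are conditionally independent given (Z₃, θ) for every value of θ, then Z₁ and Z₂ are conditionally independent given (Z₃, T). -/
open Finset

/-- Theorem 2 of the paper, discrete form.
`π` is a prior on the parameter `θ`, and `p θ` is the joint pmf of `(Z₁, Z₂, Z₃)` under
parameter value `θ`.  `T` is a statistic of `Z₁` which is sufficient for `θ`, i.e. the
conditional distribution `P(Z₁ | Z₃, T, θ)` does not depend on `θ` (stated in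
cross-multiplied form).  If `Z₁ ⊥ Z₂ | (Z₃, θ)` for every `θ` (cross-multiplied form),
then `Z₁ ⊥ Z₂ | (Z₃, T)` under the mixture `q` of the `p θ` over the prior `π`
(cross-multiplied form). -/
theorem stmt1 {Ω1 Ω2 Ω3 ΩT Θ : Type*}
    [Fintype Ω1] [Fintype Ω2] [Fintype Ω3] [Fintype Θ] [DecidableEq ΩT]
    (π : Θ → ℝ) (hπ : ∀ θ, 0 ≤ π θ) (hπ1 : ∑ θ, π θ = 1)
    (p : Θ → Ω1 → Ω2 → Ω3 → ℝ)
    (hp : ∀ θ, (∀ z1 z2 z3, 0 ≤ p θ z1 z2 z3) ∧ (∑ z1, ∑ z2, ∑ z3, p θ z1 z2 z3) = 1)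
    (T : Ω1 → ΩT)
    -- sufficiency: `P(Z₁ = z1 | Z₃ = z3, T = T z1, θ)` does not depend on `θ`
    (hsuff : ∀ θ θ' z1 z3,
      (∑ w2, p θ z1 w2 z3)
          * (∑ w1 ∈ univ.filter (fun w1 => T w1 = T z1), ∑ w2, p θ' w1 w2 z3)
        = (∑ w2, p θ' z1 w2 z3)
          * (∑ w1 ∈ univ.filter (fun w1 => T w1 = T z1), ∑ w2, p θ w1 w2 z3))
    -- conditional independence `Z₁ ⊥ Z₂ | (Z₃, θ)` for every value of `θ`
    (hci : ∀ θ z1 z2 z3,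
      p θ z1 z2 z3 * (∑ w1, ∑ w2, p θ w1 w2 z3)
        = (∑ w2, p θ z1 w2 z3) * (∑ w1, p θ w1 z2 z3)) :
    -- conclusion: `Z₁ ⊥ Z₂ | (Z₃, T)` under the mixture `q`
    ∀ z1 z2 z3,
      (∑ θ, π θ * p θ z1 z2 z3)
          * (∑ w1 ∈ univ.filter (fun w1 => T w1 = T z1), ∑ w2, ∑ θ, π θ * p θ w1 w2 z3)
        = (∑ w2, ∑ θ, π θ * p θ z1 w2 z3)
          * (∑ w1 ∈ univ.filter (fun w1 => T w1 = T z1), ∑ θ, π θ * p θ w1 z2 z3) := by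
  intro z1 z2 z3
  classical
  set S : Finset Ω1 := univ.filter (fun w1 => T w1 = T z1) with hS
  set A : Θ → ℝ := fun θ => ∑ w2, p θ z1 w2 z3 with hA
  set B : Θ → ℝ := fun θ => ∑ w1 ∈ S, ∑ w2, p θ w1 w2 z3 with hB
  set C : Θ → ℝ := fun θ => ∑ w1, ∑ w2, p θ w1 w2 z3 with hC
  set D : Θ → ℝ := fun θ => ∑ w1, p θ w1 z2 z3 with hD
  set E : Θ → ℝ := fun θ => ∑ w1 ∈ S, p θ w1 z2 z3 with hE
  set P : Θ → ℝ := fun θ => p θ z1 z2 z3 with hP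
  -- rewrite goal sums
  have e1 : (∑ w2, ∑ θ, π θ * p θ z1 w2 z3) = ∑ θ, π θ * A θ := by
    rw [Finset.sum_comm]; simp [hA, Finset.mul_sum]
  have e2 : (∑ w1 ∈ S, ∑ w2, ∑ θ, π θ * p θ w1 w2 z3) = ∑ θ, π θ * B θ := by
    have h : ∀ w1, (∑ w2, ∑ θ, π θ * p θ w1 w2 z3) = ∑ θ, π θ * ∑ w2, p θ w1 w2 z3 := by
      intro w1; rw [Finset.sum_comm]; simp [Finset.mul_sum]
    simp only [h]
    rw [Finset.sum_comm]
    simp [hB, Finset.mul_sum]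
  have e3 : (∑ w1 ∈ S, ∑ θ, π θ * p θ w1 z2 z3) = ∑ θ, π θ * E θ := by
    rw [Finset.sum_comm]; simp [hE, Finset.mul_sum]
  rw [e1, e2, e3]
  -- facts per θ
  have hECBD : ∀ θ, E θ * C θ = B θ * D θ := by
    intro θ
    simp only [hE, hB]
    rw [Finset.sum_mul, Finset.sum_mul]
    refine Finset.sum_congr rfl fun w1 _ => hci θ w1 z2 z3
  have hPCAD : ∀ θ, P θ * C θ = A θ * D θ := fun θ => hci θ z1 z2 z3
  have hABsym : ∀ θ θ', A θ * B θ' = A θ' * B θ := fun θ θ' => hsuff θ θ' z1 z3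
  have hCzero : ∀ θ, C θ = 0 → P θ = 0 ∧ A θ = 0 ∧ B θ = 0 ∧ E θ = 0 := by
    intro θ h
    have hnn : ∀ w1 w2, 0 ≤ p θ w1 w2 z3 := fun w1 w2 => (hp θ).1 w1 w2 z3
    have hz : ∀ w1 w2, p θ w1 w2 z3 = 0 := by
      intro w1 w2
      have h0 : ∀ w1 ∈ (univ : Finset Ω1), (0:ℝ) ≤ ∑ w2, p θ w1 w2 z3 :=
        fun w1 _ => Finset.sum_nonneg fun w2 _ => hnn w1 w2
      have h1 := (Finset.sum_eq_zero_iff_of_nonneg h0).mp h w1 (mem_univ w1)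
      have h2 : ∀ w2 ∈ (univ : Finset Ω2), (0:ℝ) ≤ p θ w1 w2 z3 := fun w2 _ => hnn w1 w2
      exact (Finset.sum_eq_zero_iff_of_nonneg h2).mp h1 w2 (mem_univ w2)
    refine ⟨hz z1 z2, ?_, ?_, ?_⟩ <;> simp [hA, hB, hE, hz]
  -- key symmetric identity
  have key : ∀ θ θ', P θ * B θ' + P θ' * B θ = A θ * E θ' + A θ' * E θ := by
    intro θ θ'
    by_cases h1 : C θ = 0
    · obtain ⟨hp0, ha0, hb0, he0⟩ := hCzero θ h1
      simp [hp0, ha0, hb0, he0]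
    by_cases h2 : C θ' = 0
    · obtain ⟨hp0, ha0, hb0, he0⟩ := hCzero θ' h2
      simp [hp0, ha0, hb0, he0]
    have hne : C θ * C θ' ≠ 0 := mul_ne_zero h1 h2
    apply mul_right_cancel₀ hne
    have k1 := hPCAD θ
    have k2 := hPCAD θ'
    have k3 := hECBD θ
    have k4 := hECBD θ'
    have k5 := hABsym θ θ'
    linear_combination (B θ' * C θ') * k1 + (B θ * C θ) * k2 - (A θ' * C θ') * k3
      - (A θ * C θ) * k4 + (D θ * C θ' - D θ' * C θ) * k5
  -- expand products as double sums and symmetrize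
  have expand : ∀ f g : Θ → ℝ,
      (∑ θ, π θ * f θ) * (∑ θ, π θ * g θ)
        = ∑ θ, ∑ θ', (π θ * π θ') * (f θ * g θ') := by
    intro f g
    rw [Finset.sum_mul_sum]
    exact Finset.sum_congr rfl fun θ _ => Finset.sum_congr rfl fun θ' _ => by ring
  have comm : ∀ f g : Θ → ℝ,
      (∑ θ, ∑ θ', (π θ * π θ') * (f θ * g θ'))
        = ∑ θ, ∑ θ', (π θ * π θ') * (g θ * f θ') := by
    intro f g
    rw [Finset.sum_comm]
    exact Finset.sum_congr rfl fun θ _ => Finset.sum_congr rfl fun θ' _ => by ring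
  rw [expand P B, expand A E]
  have h2 : (∑ θ, ∑ θ', (π θ * π θ') * (P θ * B θ'))
        + (∑ θ, ∑ θ', (π θ * π θ') * (B θ * P θ'))
      = (∑ θ, ∑ θ', (π θ * π θ') * (A θ * E θ'))
        + (∑ θ, ∑ θ', (π θ * π θ') * (E θ * A θ')) := by
    rw [← Finset.sum_add_distrib, ← Finset.sum_add_distrib]
    refine Finset.sum_congr rfl fun θ _ => ?_
    rw [← Finset.sum_add_distrib, ← Finset.sum_add_distrib]
    refine Finset.sum_congr rfl fun θ' _ => ?_
    linear_combination (π θ * π θ') * key θ θ'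
  have c1 := comm P B
  have c2 := comm A E
  linarith
end

section
/- Let θ be a random parameter and Z₁, Z₂, Z₃ random variables with Z₁ ⊥ Z₂ | (Z₃, θ), and let T = T(Z₁) be sufficient for θ in the sense that P(Z₁ | Z₃, T, θ) = P(Z₁ | Z₃, T) almost surely. Then P(Z₁ = z₁, Z₂ = z₂ | Z₃, T) = P(Z₁ = z₁ | Z₃, T) · P(Z₂ = z₂ | Z₃, T) for all z₁, z₂, i.e., the factorization obtained by integrating out θ against its conditional density given (Z₃, T) preserves independence. -/
open Finset

/-- key computation in the proof of Theorem 2, discrete form.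
`π` is the (prior) distribution of the random parameter `θ` and `p θ` the joint pmf of
`(Z₁, Z₂, Z₃)` given `θ`.  Assume `Z₁ ⊥ Z₂ | (Z₃, θ)` and that `T = T(Z₁)` is sufficient
for `θ` in the sense that `P(Z₁ = z₁ | Z₃ = z₃, T = T z₁, θ)` is the same for all values
of `θ`.  Then the conditional law given `(Z₃, T)`, obtained by mixing over `θ`,
factorizes:
`P(Z₁ = z₁, Z₂ = z₂ | Z₃, T) = P(Z₁ = z₁ | Z₃, T) · P(Z₂ = z₂ | Z₃, T)`. -/
theorem stmt12 {Ω1 Ω2 Ω3 ΩT Θ : Type*}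
    [Fintype Ω1] [Fintype Ω2] [Fintype Ω3] [Fintype Θ] [DecidableEq ΩT]
    (π : Θ → ℝ) (hπ : ∀ θ, 0 ≤ π θ) (hπ1 : ∑ θ, π θ = 1)
    (p : Θ → Ω1 → Ω2 → Ω3 → ℝ)
    (hp : ∀ θ, (∀ z1 z2 z3, 0 ≤ p θ z1 z2 z3) ∧ (∑ z1, ∑ z2, ∑ z3, p θ z1 z2 z3) = 1)
    (T : Ω1 → ΩT)
    -- positivity of the conditioning events, so the conditional probabilities are defined
    (hpos : ∀ θ z1 z3,
      0 < ∑ w1 ∈ univ.filter (fun w1 => T w1 = T z1), ∑ w2, p θ w1 w2 z3)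
    -- sufficiency: `P(Z₁ = z1 | Z₃ = z3, T = T z1, θ)` is the same for all `θ`
    (hsuff : ∀ θ θ' z1 z3,
      (∑ w2, p θ z1 w2 z3)
          / (∑ w1 ∈ univ.filter (fun w1 => T w1 = T z1), ∑ w2, p θ w1 w2 z3)
        = (∑ w2, p θ' z1 w2 z3)
          / (∑ w1 ∈ univ.filter (fun w1 => T w1 = T z1), ∑ w2, p θ' w1 w2 z3))
    -- conditional independence `Z₁ ⊥ Z₂ | (Z₃, θ)` for every value of `θ`
    (hci : ∀ θ z1 z2 z3,
      p θ z1 z2 z3 * (∑ w1, ∑ w2, p θ w1 w2 z3)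
        = (∑ w2, p θ z1 w2 z3) * (∑ w1, p θ w1 z2 z3)) :
    ∀ z1 z2 z3,
      (∑ θ, π θ * p θ z1 z2 z3)
          / (∑ w1 ∈ univ.filter (fun w1 => T w1 = T z1), ∑ w2, ∑ θ, π θ * p θ w1 w2 z3)
        = ((∑ w2, ∑ θ, π θ * p θ z1 w2 z3)
            / (∑ w1 ∈ univ.filter (fun w1 => T w1 = T z1), ∑ w2, ∑ θ, π θ * p θ w1 w2 z3))
          * ((∑ w1 ∈ univ.filter (fun w1 => T w1 = T z1), ∑ θ, π θ * p θ w1 z2 z3)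
            / (∑ w1 ∈ univ.filter (fun w1 => T w1 = T z1), ∑ w2, ∑ θ, π θ * p θ w1 w2 z3)) := by
  intro z1 z2 z3
  obtain ⟨θ0, hθ0⟩ : ∃ θ, 0 < π θ := by
    by_contra h
    push_neg at h
    have h0 : ∑ θ, π θ = 0 := Finset.sum_eq_zero fun θ _ => le_antisymm (h θ) (hπ θ)
    rw [h0] at hπ1; norm_num at hπ1
  set Ts := univ.filter (fun w1 => T w1 = T z1) with hTs
  -- abbreviations as plain terms
  let a : Θ → ℝ := fun θ => ∑ w2, p θ z1 w2 z3
  let S : Θ → ℝ := fun θ => ∑ w1 ∈ Ts, ∑ w2, p θ w1 w2 z3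
  let M : Θ → ℝ := fun θ => ∑ w1, ∑ w2, p θ w1 w2 z3
  let B : Θ → ℝ := fun θ => ∑ w1 ∈ Ts, p θ w1 z2 z3
  let bb : Θ → ℝ := fun θ => ∑ w1, p θ w1 z2 z3
  set c : ℝ := a θ0 / S θ0 with hc
  have hS : ∀ θ, 0 < S θ := fun θ => hpos θ z1 z3
  have hM : ∀ θ, 0 < M θ := fun θ =>
    lt_of_lt_of_le (hS θ) (Finset.sum_le_sum_of_subset_of_nonneg (Finset.filter_subset _ _)
      (fun i _ _ => Finset.sum_nonneg fun j _ => ((hp θ).1 i j z3)))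
  have hBM : ∀ θ, B θ * M θ = S θ * bb θ := by
    intro θ
    show (∑ w1 ∈ Ts, p θ w1 z2 z3) * M θ = (∑ w1 ∈ Ts, ∑ w2, p θ w1 w2 z3) * bb θ
    rw [Finset.sum_mul, Finset.sum_mul]
    exact Finset.sum_congr rfl fun w1 _ => hci θ w1 z2 z3
  have hpS : ∀ θ, p θ z1 z2 z3 * S θ = a θ * B θ := by
    intro θ
    have h1 : p θ z1 z2 z3 * S θ * M θ = a θ * B θ * M θ := by
      calc p θ z1 z2 z3 * S θ * M θ = (p θ z1 z2 z3 * M θ) * S θ := by ring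
      _ = (a θ * bb θ) * S θ := by rw [hci θ z1 z2 z3]
      _ = a θ * (S θ * bb θ) := by ring
      _ = a θ * (B θ * M θ) := by rw [hBM θ]
      _ = a θ * B θ * M θ := by ring
    exact mul_right_cancel₀ (hM θ).ne' h1
  have ha : ∀ θ, a θ = c * S θ := by
    intro θ
    have h := hsuff θ θ0 z1 z3
    rw [div_eq_div_iff (hS θ).ne' (hS θ0).ne'] at h
    rw [hc, div_mul_eq_mul_div, eq_div_iff (hS θ0).ne']
    linarith [h]
  have hq : ∀ θ, p θ z1 z2 z3 = c * B θ := by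
    intro θ
    have : p θ z1 z2 z3 * S θ = c * B θ * S θ := by
      rw [hpS θ, ha θ]; ring
    exact mul_right_cancel₀ (hS θ).ne' this
  -- rewrite the big sums
  have e1 : (∑ w1 ∈ Ts, ∑ w2, ∑ θ, π θ * p θ w1 w2 z3) = ∑ θ, π θ * S θ := by
    have step : ∀ w1 : Ω1, (∑ w2, ∑ θ, π θ * p θ w1 w2 z3) = ∑ θ, ∑ w2, π θ * p θ w1 w2 z3 :=
      fun w1 => Finset.sum_comm
    simp_rw [step]
    rw [Finset.sum_comm]
    refine Finset.sum_congr rfl fun θ _ => ?_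
    simp [S, Finset.mul_sum]
  have e2 : (∑ w2, ∑ θ, π θ * p θ z1 w2 z3) = ∑ θ, π θ * a θ := by
    rw [Finset.sum_comm]
    refine Finset.sum_congr rfl fun θ _ => ?_
    simp [a, Finset.mul_sum]
  have e3 : (∑ w1 ∈ Ts, ∑ θ, π θ * p θ w1 z2 z3) = ∑ θ, π θ * B θ := by
    rw [Finset.sum_comm]
    refine Finset.sum_congr rfl fun θ _ => ?_
    simp [B, Finset.mul_sum]
  have e4 : (∑ θ, π θ * p θ z1 z2 z3) = c * ∑ θ, π θ * B θ := by
    rw [Finset.mul_sum]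
    refine Finset.sum_congr rfl fun θ _ => ?_
    rw [hq θ]; ring
  have e5 : (∑ θ, π θ * a θ) = c * ∑ θ, π θ * S θ := by
    rw [Finset.mul_sum]
    refine Finset.sum_congr rfl fun θ _ => ?_
    rw [ha θ]; ring
  have hD : 0 < ∑ θ, π θ * S θ :=
    Finset.sum_pos' (fun θ _ => mul_nonneg (hπ θ) (hS θ).le)
      ⟨θ0, Finset.mem_univ θ0, mul_pos hθ0 (hS θ0)⟩
  rw [e1, e2, e3, e4, e5]
  field_simp
end
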